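/- arXiv:2508.03157 — 2 statements merged into one kernel-verified Lean document; each statement's English description precedes it below -/
import Mathlib

section
/- Suppose B is an N²×N² matrix over a field K containing elements ξ_α, ξ_β, ξ_γ, such that the scattering matrices R_{βα} = −(I⊗I − ξ_α B)⁻¹(I⊗I − ξ_β B) (and similarly R_{γα}, R_{γβ}) are well defined and satisfy the Yang–Baxter equation (R_{γβ}⊗I)(I⊗R_{γα})(R_{βα}⊗I) = (I⊗R_{βα})(R_{γα}⊗I)(I⊗R_{γβ}). Then for any scalars a, b with a + b = 1 and 1−aξ_α, 1−aξ_β, 1−aξ_γ nonzero, the scattering matrices built from B' = a(I⊗I) + bB (with the same spectral parameters) also satisfy the Yang–Baxter equation, provided one assumes that R built from B satisfies Yang–Baxter for all admissible spectral parameters (in particular at the reparameterized values η_γ = bξ_γ/(1−aξ_γ)). -/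
open Matrix

noncomputable section

variable {K : Type*} [Field K] {N : ℕ}

/-- The scattering matrix `R_{βα} = −(I⊗I − ξ_α B)⁻¹(I⊗I − ξ_β B)` built from an
`N²×N²` interaction matrix `B` (indexed by pairs); here `1` is the identity `I⊗I`. -/
def Rm (B : Matrix (Fin N × Fin N) (Fin N × Fin N) K) (ξβ ξα : K) :
    Matrix (Fin N × Fin N) (Fin N × Fin N) K :=
  -((1 - ξα • B)⁻¹ * (1 - ξβ • B))

/-- `A ⊗ I` acting on the first two of three tensor factors. -/
def legL (A : Matrix (Fin N × Fin N) (Fin N × Fin N) K) :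
    Matrix (Fin N × Fin N × Fin N) (Fin N × Fin N × Fin N) K :=
  Matrix.of fun p q => A (p.1, p.2.1) (q.1, q.2.1) * (if p.2.2 = q.2.2 then 1 else 0)

/-- `I ⊗ A` acting on the last two of three tensor factors. -/
def legR (A : Matrix (Fin N × Fin N) (Fin N × Fin N) K) :
    Matrix (Fin N × Fin N × Fin N) (Fin N × Fin N × Fin N) K :=
  Matrix.of fun p q => (if p.1 = q.1 then 1 else 0) * A (p.2.1, p.2.2) (q.2.1, q.2.2)

/-- The Yang–Baxter equation for the scattering matrices built from `B`
at spectral parameters `ξ_α, ξ_β, ξ_γ`. -/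
def YBE (B : Matrix (Fin N × Fin N) (Fin N × Fin N) K) (ξα ξβ ξγ : K) : Prop :=
  legL (Rm B ξγ ξβ) * legR (Rm B ξγ ξα) * legL (Rm B ξβ ξα) =
    legR (Rm B ξβ ξα) * legL (Rm B ξγ ξα) * legR (Rm B ξγ ξβ)

/-!
Writing `B' = a I + b B`, one has `I − ξ B' = (1 − aξ)(I − η B)` with `η = bξ/(1 − aξ)`, so
every scattering matrix of `B'` is a nonzero scalar multiple of the corresponding scattering
matrix of `B` at the parameters `η`. Scalars pass through `A ↦ A ⊗ I` and `A ↦ I ⊗ A`, and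
both sides of the Yang–Baxter equation pick up the same product of three scalars.
-/

theorem Matrix.inv_smul_of_ne_zero {n : Type*} [Fintype n] [DecidableEq n]
    {k : K} (hk : k ≠ 0) (A : Matrix n n K) : (k • A)⁻¹ = k⁻¹ • A⁻¹ := by
  by_cases hA : IsUnit A.det
  · simpa [Units.smul_def] using Matrix.inv_smul' (A := A) (Units.mk0 k hk) hA
  · have hkA : ¬IsUnit (k • A).det := by
      simpa [det_smul, isUnit_iff_ne_zero, hk] using hA
    rw [nonsing_inv_apply_not_isUnit _ hA, nonsing_inv_apply_not_isUnit _ hkA, smul_zero]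

theorem Matrix.one_sub_smul_affine {n : Type*} [Fintype n] [DecidableEq n]
    (a b ξ : K) (hξ : 1 - a * ξ ≠ 0) (B : Matrix n n K) :
    1 - ξ • (a • 1 + b • B) = (1 - a * ξ) • (1 - (b * ξ / (1 - a * ξ)) • B) := by
  rw [smul_sub, smul_smul, mul_div_cancel₀ _ hξ, smul_add, smul_smul, smul_smul, sub_smul,
    one_smul, mul_comm ξ a, mul_comm ξ b]
  abel

theorem Rm_affine (a b ξβ ξα : K) (hβ : 1 - a * ξβ ≠ 0) (hα : 1 - a * ξα ≠ 0)
    (B : Matrix (Fin N × Fin N) (Fin N × Fin N) K) :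
    Rm (a • 1 + b • B) ξβ ξα =
      ((1 - a * ξβ) / (1 - a * ξα)) • Rm B (b * ξβ / (1 - a * ξβ)) (b * ξα / (1 - a * ξα)) := by
  rw [Rm, Rm, one_sub_smul_affine a b ξα hα, one_sub_smul_affine a b ξβ hβ,
    inv_smul_of_ne_zero hα, smul_mul_smul_comm, ← smul_neg, inv_mul_eq_div, div_eq_mul_inv,
    mul_comm]

theorem legL_smul (c : K) (A : Matrix (Fin N × Fin N) (Fin N × Fin N) K) :
    legL (c • A) = c • legL A := by
  ext p q
  simp [legL]

theorem legR_smul (c : K) (A : Matrix (Fin N × Fin N) (Fin N × Fin N) K) :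
    legR (c • A) = c • legR A := by
  ext p q
  simp [legR, mul_left_comm]

theorem ybe_convex_combination_general (B : Matrix (Fin N × Fin N) (Fin N × Fin N) K)
    (hYB : ∀ u v w : K, YBE B u v w)
    (a b ξα ξβ ξγ : K)
    (hα : 1 - a * ξα ≠ 0) (hβ : 1 - a * ξβ ≠ 0) (hγ : 1 - a * ξγ ≠ 0) :
    YBE (a • (1 : Matrix (Fin N × Fin N) (Fin N × Fin N) K) + b • B) ξα ξβ ξγ := by
  have hYBη := hYB (b * ξα / (1 - a * ξα)) (b * ξβ / (1 - a * ξβ)) (b * ξγ / (1 - a * ξγ))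
  unfold YBE at hYBη ⊢
  simp only [Rm_affine a b _ _ hγ hβ, Rm_affine a b _ _ hγ hα, Rm_affine a b _ _ hβ hα,
    legL_smul, legR_smul, smul_mul_smul_comm, hYBη]
  congr 1
  ring

/-- If the scattering matrices built from `B` satisfy the Yang–Baxter equation for all
spectral parameters (in particular at the reparameterized values `η_γ = bξ_γ/(1−aξ_γ)`),
then for any scalars `a, b` with `a + b = 1` and `1 − aξ_α, 1 − aξ_β, 1 − aξ_γ` nonzero,
the scattering matrices built from `B' = a(I⊗I) + bB` also satisfy the
Yang–Baxter equation with the same spectral parameters `ξ_α, ξ_β, ξ_γ`. -/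
theorem ybe_convex_combination (B : Matrix (Fin N × Fin N) (Fin N × Fin N) K)
    (hYB : ∀ u v w : K, YBE B u v w)
    (a b ξα ξβ ξγ : K) (hab : a + b = 1)
    (hα : 1 - a * ξα ≠ 0) (hβ : 1 - a * ξβ ≠ 0) (hγ : 1 - a * ξγ ≠ 0) :
    YBE (a • (1 : Matrix (Fin N × Fin N) (Fin N × Fin N) K) + b • B) ξα ξβ ξγ :=
  ybe_convex_combination_general B hYB a b ξα ξβ ξγ hα hβ hγ

end
end

section
/- With B(λ,λ′) the 9×9 matrix of the two-parameter 3-species infection model (B·e_{ii}=e_{ii}; B·e_{ij}=λe_{ij}+(1−λ)e_{jj} for i<j; B·e_{ij}=λ′e_{ij}+(1−λ′)e_{ii} for i>j), and R_{βα} = −(I₉ − ξ_α B)⁻¹(I₉ − ξ_β B), the entries of R_{βα} are given explicitly by: R_{ν₁ν₂,ν₁ν₂} = −(1−ξ_β)/(1−ξ_α) if ν₁=ν₂; R_{ν₁ν₂,ν₁ν₂} = −(1−λξ_β)/(1−λξ_α) if ν₁<ν₂; R_{ν₂ν₂,ν₁ν₂} = (1−λ)(ξ_β−ξ_α)/((1−ξ_α)(1−λξ_α))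 if ν₁<ν₂; R_{ν₁ν₁,ν₁ν₂} = (1−λ′)(ξ_β−ξ_α)/((1−ξ_α)(1−λ′ξ_α)) if ν₁>ν₂; R_{ν₁ν₂,ν₁ν₂} = −(1−λ′ξ_β)/(1−λ′ξ_α) if ν₁>ν₂; and all other entries are 0. -/
/-
The matrix `B` is `D + J` with `D` diagonal (survival rates `d q`: `1`, `λ` or `λ′`) and `J`
moving the remaining mass `1 - d q` of a state `q = (i, j)` to the absorbing state `a q = (j, j)`
or `(i, i)`, where `d (a q) = 1`. This makes `1 - xB` invert in closed form: an entrywise check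
gives `(1 - xB) M(x, y) = -(1 - yB)` for the claimed matrix `M(x, y)`, and at `y = 0` this shows
that `1 - xB` is invertible, so `R = -(1 - xB)⁻¹ (1 - yB) = M(x, y)`.
-/

open Matrix

noncomputable section

/-- The field of rational functions in `ξ_α, ξ_β, λ, λ′`. -/
abbrev KK : Type := FractionRing (MvPolynomial (Fin 4) ℚ)

def xi (i : Fin 4) : KK := algebraMap (MvPolynomial (Fin 4) ℚ) KK (MvPolynomial.X i)

/-- `ξ_α`. -/
def ξα : KK := xi 0
/-- `ξ_β`. -/
def ξβ : KK := xi 1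
/-- `λ`. -/
def lam : KK := xi 2
/-- `λ′`. -/
def lam' : KK := xi 3

/-- The 9×9 matrix `B(λ,λ′)` of the two-parameter 3-species infection model:
`B·e_{ii} = e_{ii}`; for `i<j`, `B·e_{ij} = λ e_{ij} + (1−λ) e_{jj}`;
for `i>j`, `B·e_{ij} = λ′ e_{ij} + (1−λ′) e_{ii}`. -/
def Bmat : Matrix (Fin 3 × Fin 3) (Fin 3 × Fin 3) KK :=
  Matrix.of fun p q =>
    if q.1 = q.2 then (if p = q then 1 else 0)
    else if q.1 < q.2 then
      (if p = q then lam else if p = (q.2, q.2) then 1 - lam else 0)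
    else
      (if p = q then lam' else if p = (q.1, q.1) then 1 - lam' else 0)

/-- The scattering matrix `R_{βα} = −(I₉ − ξ_α B)⁻¹ (I₉ − ξ_β B)`. -/
def R : Matrix (Fin 3 × Fin 3) (Fin 3 × Fin 3) KK :=
  -((1 - ξα • Bmat)⁻¹ * (1 - ξβ • Bmat))

section ResolventRatio

variable {ι K : Type*} [Fintype ι] [DecidableEq ι] [Field K] (d : ι → K) (a : ι → ι)

def jumpMatrix : Matrix ι ι K := of fun p q => if p = a q then 1 - d q else 0

def closedFormR (x y : K) : Matrix ι ι K :=
  -diagonal (fun q => (1 - d q * y) / (1 - d q * x)) +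
    jumpMatrix d a * diagonal (fun q => (y - x) / ((1 - x) * (1 - d q * x)))

variable {d a}

theorem closedFormR_apply (hd : ∀ q, d (a q) = 1) (x y : K) (p q : ι) :
    closedFormR d a x y p q =
      if p = q then -((1 - d q * y) / (1 - d q * x))
      else if p = a q then (1 - d q) * ((y - x) / ((1 - x) * (1 - d q * x)))
      else 0 := by
  simp only [closedFormR, jumpMatrix, Matrix.add_apply, Matrix.neg_apply, diagonal_apply,
    mul_diagonal, of_apply]
  rcases eq_or_ne p q with rfl | hpq
  · by_cases hpa : p = a p
    · have hp : d p = 1 := hpa ▸ hd p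
      simp [← hpa, hp]
    · simp [hpa]
  · simp [hpq]

theorem one_sub_smul_mul_closedFormR (hd : ∀ q, d (a q) = 1) (x y : K)
    (hx : ∀ q, 1 - d q * x ≠ 0) :
    (1 - x • (diagonal d + jumpMatrix d a)) * closedFormR d a x y =
      -(1 - y • (diagonal d + jumpMatrix d a)) := by
  ext p q
  simp only [mul_apply, closedFormR, jumpMatrix, Matrix.add_apply, Matrix.neg_apply,
    diagonal_apply, of_apply, Matrix.sub_apply, one_apply, Matrix.smul_apply, smul_eq_mul, mul_add,
    mul_neg, Finset.sum_add_distrib, Finset.sum_neg_distrib, mul_ite, mul_zero, ite_mul, zero_mul,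
    Finset.sum_ite_eq', Finset.mem_univ, if_true, hd]
  have hx₁ : 1 - x ≠ 0 := by simpa [hd] using hx (a q)
  have hxq : 1 - d q * x ≠ 0 := hx q
  have hxq' : 1 - x * d q ≠ 0 := by rwa [mul_comm]
  -- In row `a q` the check reduces to `x (1 - d y) / (1 - d x) + (y - x) / (1 - d x) = y`,
  -- with `d = d q`.
  by_cases hpq : p = q <;> by_cases hpa : p = a q
  · have hq : d q = 1 := by rw [← hd q, ← hpa, hpq]
    subst hpq
    simp only [↓reduceIte, hq, mul_one, sub_self, mul_zero, ite_self, add_zero, one_mul,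
      zero_mul, neg_sub]
    field_simp
    ring
  · subst hpq
    simp only [↓reduceIte, hpa, add_zero, sub_self, mul_zero, ite_self, zero_mul, neg_sub]
    field_simp
    ring
  · subst hpa
    simp only [hpq, ↓reduceIte, zero_add, zero_sub, neg_mul, neg_neg, hd, mul_one, sub_self,
      mul_zero, ite_self, add_zero]
    field_simp
    ring
  · simp [hpq, hpa]

theorem neg_inv_mul_eq_closedFormR (hd : ∀ q, d (a q) = 1) (x y : K)
    (hx : ∀ q, 1 - d q * x ≠ 0) :
    -((1 - x • (diagonal d + jumpMatrix d a))⁻¹ * (1 - y • (diagonal d + jumpMatrix d a))) =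
      closedFormR d a x y := by
  have hinv : (1 - x • (diagonal d + jumpMatrix d a)) * -closedFormR d a x 0 = 1 := by
    rw [mul_neg, one_sub_smul_mul_closedFormR hd x 0 hx, zero_smul, sub_zero, neg_neg]
  rw [← neg_neg (1 - y • _), ← one_sub_smul_mul_closedFormR hd x y hx, mul_neg, neg_neg,
    nonsing_inv_mul_cancel_left _ _ (isUnit_det_of_right_inverse hinv)]

end ResolventRatio

def survivalRate (q : Fin 3 × Fin 3) : KK :=
  if q.1 = q.2 then 1 else if q.1 < q.2 then lam else lam'

def absorbingState (q : Fin 3 × Fin 3) : Fin 3 × Fin 3 :=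
  if q.1 < q.2 then (q.2, q.2) else (q.1, q.1)

theorem survivalRate_absorbingState (q : Fin 3 × Fin 3) :
    survivalRate (absorbingState q) = 1 := by
  unfold absorbingState
  split_ifs <;> simp [survivalRate]

theorem Bmat_eq : Bmat = diagonal survivalRate + jumpMatrix survivalRate absorbingState := by
  ext ⟨p₁, p₂⟩ ⟨q₁, q₂⟩
  simp only [Bmat, survivalRate, absorbingState, jumpMatrix, Matrix.add_apply, diagonal_apply,
    of_apply]
  split_ifs <;> simp_all <;> omega

theorem one_sub_algebraMap_mul_ξα_ne_zero (r : MvPolynomial (Fin 4) ℚ) :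
    1 - algebraMap _ KK r * ξα ≠ 0 := by
  have hpoly : (1 - r * MvPolynomial.X 0 : MvPolynomial (Fin 4) ℚ) ≠ 0 := fun h => by
    simpa using congrArg MvPolynomial.constantCoeff h
  simpa [ξα, xi] using
    (IsFractionRing.injective (MvPolynomial (Fin 4) ℚ) KK).ne (a₂ := 0) hpoly

theorem one_sub_survivalRate_mul_ξα_ne_zero (q : Fin 3 × Fin 3) :
    1 - survivalRate q * ξα ≠ 0 := by
  unfold survivalRate lam lam' xi
  split_ifs
  · simpa using one_sub_algebraMap_mul_ξα_ne_zero 1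
  all_goals exact one_sub_algebraMap_mul_ξα_ne_zero _

/-- The explicit entries of `R_{βα}`: writing `R_{π₁π₂,ν₁ν₂}` for the entry in row
`(π₁,π₂)` and column `(ν₁,ν₂)`,
`R_{ν₁ν₂,ν₁ν₂} = −(1−ξ_β)/(1−ξ_α)` if `ν₁=ν₂`;
`R_{ν₁ν₂,ν₁ν₂} = −(1−λξ_β)/(1−λξ_α)` if `ν₁<ν₂`;
`R_{ν₂ν₂,ν₁ν₂} = (1−λ)(ξ_β−ξ_α)/((1−ξ_α)(1−λξ_α))` if `ν₁<ν₂`;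
`R_{ν₁ν₁,ν₁ν₂} = (1−λ′)(ξ_β−ξ_α)/((1−ξ_α)(1−λ′ξ_α))` if `ν₁>ν₂`;
`R_{ν₁ν₂,ν₁ν₂} = −(1−λ′ξ_β)/(1−λ′ξ_α)` if `ν₁>ν₂`; all other entries are `0`. -/
theorem R_entries (p q : Fin 3 × Fin 3) :
    R p q =
      if p = q then
        (if q.1 = q.2 then -((1 - ξβ) / (1 - ξα))
          else if q.1 < q.2 then -((1 - lam * ξβ) / (1 - lam * ξα))
          else -((1 - lam' * ξβ) / (1 - lam' * ξα)))
      else if q.1 < q.2 ∧ p = (q.2, q.2) then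
        (1 - lam) * (ξβ - ξα) / ((1 - ξα) * (1 - lam * ξα))
      else if q.2 < q.1 ∧ p = (q.1, q.1) then
        (1 - lam') * (ξβ - ξα) / ((1 - ξα) * (1 - lam' * ξα))
      else 0 := by
  rw [R, Bmat_eq, neg_inv_mul_eq_closedFormR survivalRate_absorbingState ξα ξβ
    one_sub_survivalRate_mul_ξα_ne_zero, closedFormR_apply survivalRate_absorbingState]
  rcases lt_trichotomy q.1 q.2 with h | h | h
  · simp [survivalRate, absorbingState, h, h.ne, h.not_gt, mul_div_assoc]
  · simp [survivalRate, absorbingState, h]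
  · simp [survivalRate, absorbingState, h, h.ne', h.not_gt, mul_div_assoc]

end
end
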